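/- Let 1 ≤ q < p and let λ_1 ≥ ... ≥ λ_p ≥ 0 with λ_l > 0 for l ≤ q and λ_l = 0 for l > q. Suppose λ̂_n,l² = λ_l² + O(n^{-1/2}) for l ≤ q and λ̂_n,l² = O(n^{-1}) for l > q, and set c_n = log(n)/n. Then for every l < q, the limit of (λ̂_n,q+1² + c_n)/(λ̂_n,q² + c_n) − (λ̂_n,l+1² + c_n)/(λ̂_n,l² + c_n) equals −λ_{l+1}²/λ_l² < 0, and for every l with q < l ≤ p−1, the limit of (λ̂_n,q+1² + c_n)/(λ̂_n,q² + c_n) − (λ̂_n,l+1² + c_n)/(λ̂_n,l² + c_n) equals −1. Consequently, for all sufficiently large n, the ratio (λ̂_n,i+1² + c_n)/(λ̂_n,i² + c_n) is minimized at i = q. -/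

import Mathlib

/-!
For `l ≤ q` both squared estimates in a ratio converge to positive limits, so the ridge
`c n = log n / n → 0` does not matter. For `l > q` both are `O(1/n) = o(c n)`, so the ridge
dominates numerator and denominator and the ratio tends to `1`. At the gap `l = q` the
numerator tends to `0` while the denominator tends to `λ_q² > 0`, so the ratio at `q` tends
to `0`, strictly below every other limit; finitely many indices make this eventually uniform.
-/

open Filter Asymptotics Topology

theorem Asymptotics.IsBigO.tendsto_of_sub {α : Type*} {l : Filter α} {f g : α → ℝ} {a : ℝ}
    (h : (fun x => f x - a) =O[l] g) (hg : Tendsto g l (𝓝 0)) : Tendsto f l (𝓝 a) :=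
  tendsto_sub_nhds_zero_iff.mp (h.trans_tendsto hg)

theorem tendsto_add_div_add_of_isLittleO {α 𝕜 : Type*} [NormedField 𝕜] {l : Filter α}
    {e₁ e₂ c : α → 𝕜} (h₁ : e₁ =o[l] c) (h₂ : e₂ =o[l] c) (hc : ∀ᶠ x in l, c x ≠ 0) :
    Tendsto (fun x => (e₁ x + c x) / (e₂ x + c x)) l (𝓝 1) := by
  have h := (h₁.tendsto_div_nhds_zero.add_const 1).div (h₂.tendsto_div_nhds_zero.add_const 1)
    (by norm_num)
  rw [zero_add, div_one] at h
  refine h.congr' ?_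
  filter_upwards [hc] with x hx
  rw [Pi.div_apply, div_add_one hx, div_add_one hx, div_div_div_cancel_right₀ hx]

theorem Filter.eventually_forall_lt_of_tendsto_sub {α ι : Type*} {l : Filter α} {s : Set ι}
    (hs : s.Finite) {f : α → ℝ} {g : ι → α → ℝ}
    (h : ∀ i ∈ s, ∃ L < 0, Tendsto (fun x => f x - g i x) l (𝓝 L)) :
    ∀ᶠ x in l, ∀ i ∈ s, f x < g i x := by
  refine (eventually_all_finite hs).mpr fun i hi => ?_
  obtain ⟨L, hL, hlim⟩ := h i hi
  filter_upwards [hlim.eventually_lt_const hL] with x hx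
  linarith

theorem tendsto_log_div_natCast_atTop :
    Tendsto (fun n : ℕ => Real.log n / n) atTop (𝓝 0) := by
  have h := (Real.tendsto_pow_log_div_mul_add_atTop 1 0 1 one_ne_zero).comp
    tendsto_natCast_atTop_atTop
  simpa [Function.comp_def] using h

theorem eventually_log_div_natCast_pos : ∀ᶠ n : ℕ in atTop, 0 < Real.log n / n := by
  filter_upwards [eventually_gt_atTop 1] with n hn
  have hn : (1 : ℝ) < n := by exact_mod_cast hn
  exact div_pos (Real.log_pos hn) (by linarith)

theorem isLittleO_inv_log_div_natCast :
    (fun n : ℕ => (n : ℝ)⁻¹) =o[atTop] fun n : ℕ => Real.log n / n := by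
  have h := (Real.isLittleO_const_log_atTop (c := 1)).comp_tendsto tendsto_natCast_atTop_atTop
  simpa [div_eq_mul_inv] using h.mul_isBigO (isBigO_refl (fun n : ℕ => (n : ℝ)⁻¹) atTop)

noncomputable def ridgeRatio (x : ℕ → ℝ) (c : ℝ) (i : ℕ) : ℝ :=
  (x (i + 1) ^ 2 + c) / (x i ^ 2 + c)

section ridgeRatio

variable {α : Type*} {l : Filter α} {x : α → ℕ → ℝ} {c : α → ℝ} {i : ℕ}

theorem tendsto_ridgeRatio {μ₀ μ₁ : ℝ} (hc : Tendsto c l (𝓝 0))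
    (h₀ : Tendsto (fun a => x a i ^ 2) l (𝓝 μ₀)) (h₁ : Tendsto (fun a => x a (i + 1) ^ 2) l (𝓝 μ₁))
    (hμ₀ : μ₀ ≠ 0) : Tendsto (fun a => ridgeRatio (x a) (c a) i) l (𝓝 (μ₁ / μ₀)) := by
  have h := (h₁.add hc).div (h₀.add hc) (by rwa [add_zero])
  rwa [add_zero, add_zero] at h

theorem tendsto_ridgeRatio_one (hc : ∀ᶠ a in l, c a ≠ 0) (h₀ : (fun a => x a i ^ 2) =o[l] c)
    (h₁ : (fun a => x a (i + 1) ^ 2) =o[l] c) :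
    Tendsto (fun a => ridgeRatio (x a) (c a) i) l (𝓝 1) :=
  tendsto_add_div_add_of_isLittleO h₁ h₀ hc

end ridgeRatio

theorem stmt_1_general (p q : ℕ) (hq1 : 1 ≤ q) (hqp : q < p) (lam : ℕ → ℝ) (hat : ℕ → ℕ → ℝ)
    (hpos : ∀ l, 1 ≤ l → l ≤ q → 0 < lam l)
    (h1 : ∀ l, 1 ≤ l → l ≤ q →
      (fun n => hat n l ^ 2 - lam l ^ 2) =O[atTop] fun n : ℕ => (n : ℝ) ^ (-(1/2 : ℝ)))
    (h2 : ∀ l, q < l → l ≤ p → (fun n => hat n l ^ 2) =O[atTop] fun n : ℕ => (n : ℝ)⁻¹)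
    (c : ℕ → ℝ) (hc : ∀ n, c n = Real.log n / n) :
    (∀ l, 1 ≤ l → l < q →
      Tendsto (fun n => (hat n (q + 1) ^ 2 + c n) / (hat n q ^ 2 + c n)
          - (hat n (l + 1) ^ 2 + c n) / (hat n l ^ 2 + c n)) atTop
        (nhds (-(lam (l + 1) ^ 2 / lam l ^ 2))) ∧ -(lam (l + 1) ^ 2 / lam l ^ 2) < 0) ∧
    (∀ l, q < l → l + 1 ≤ p →
      Tendsto (fun n => (hat n (q + 1) ^ 2 + c n) / (hat n q ^ 2 + c n)
          - (hat n (l + 1) ^ 2 + c n) / (hat n l ^ 2 + c n)) atTop (nhds (-1))) ∧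
    (∀ᶠ n in atTop, ∀ i, 1 ≤ i → i + 1 ≤ p → i ≠ q →
      (hat n (q + 1) ^ 2 + c n) / (hat n q ^ 2 + c n)
        < (hat n (i + 1) ^ 2 + c n) / (hat n i ^ 2 + c n)) := by
  obtain rfl : c = fun n : ℕ => Real.log n / n := funext hc
  have hc0 := tendsto_log_div_natCast_atTop
  have signal (l) (hl : 1 ≤ l) (hlq : l ≤ q) :
      Tendsto (fun n => hat n l ^ 2) atTop (𝓝 (lam l ^ 2)) :=
    (h1 l hl hlq).tendsto_of_sub
      ((tendsto_rpow_neg_atTop (by norm_num)).comp tendsto_natCast_atTop_atTop)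
  have noise (l) (hql : q < l) (hlp : l ≤ p) :
      (fun n => hat n l ^ 2) =o[atTop] fun n : ℕ => Real.log n / n :=
    (h2 l hql hlp).trans_isLittleO isLittleO_inv_log_div_natCast
  have sq_pos (l) (hl : 1 ≤ l) (hlq : l ≤ q) : 0 < lam l ^ 2 := pow_pos (hpos l hl hlq) 2
  have at_gap : Tendsto (fun n => ridgeRatio (hat n) (Real.log n / n) q) atTop (𝓝 0) := by
    simpa using tendsto_ridgeRatio hc0 (signal q hq1 le_rfl)
      ((noise (q + 1) q.lt_succ_self hqp).trans_tendsto hc0) (sq_pos q hq1 le_rfl).ne'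
  have below (l) (hl : 1 ≤ l) (hlq : l < q) :
      Tendsto (fun n => ridgeRatio (hat n) (Real.log n / n) q
          - ridgeRatio (hat n) (Real.log n / n) l) atTop
        (𝓝 (-(lam (l + 1) ^ 2 / lam l ^ 2))) ∧ -(lam (l + 1) ^ 2 / lam l ^ 2) < 0 :=
    ⟨by simpa using at_gap.sub (tendsto_ridgeRatio hc0 (signal l hl hlq.le)
        (signal (l + 1) (by omega) hlq) (sq_pos l hl hlq.le).ne'),
      neg_lt_zero.2 (div_pos (sq_pos (l + 1) (by omega) hlq) (sq_pos l hl hlq.le))⟩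
  have above (l) (hql : q < l) (hlp : l + 1 ≤ p) :
      Tendsto (fun n => ridgeRatio (hat n) (Real.log n / n) q
          - ridgeRatio (hat n) (Real.log n / n) l) atTop (𝓝 (-1)) := by
    simpa using at_gap.sub (tendsto_ridgeRatio_one
      (eventually_log_div_natCast_pos.mono fun _ h => h.ne') (noise l hql (by omega))
      (noise (l + 1) (by omega) hlp))
  refine ⟨below, above, ?_⟩
  have hfin : {i | 1 ≤ i ∧ i + 1 ≤ p ∧ i ≠ q}.Finite :=
    (Set.finite_lt_nat p).subset fun i hi => by simp only [Set.mem_ofPred_eq] at hi ⊢; omega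
  filter_upwards [eventually_forall_lt_of_tendsto_sub hfin fun i ⟨hi, hip, hiq⟩ =>
      hiq.lt_or_gt.elim (fun hlt => ⟨_, (below i hi hlt).2, (below i hi hlt).1⟩)
        (fun hgt => ⟨-1, by norm_num, above i hgt hip⟩)]
    with n hn i hi hip hiq using hn i ⟨hi, hip, hiq⟩

/-- Deterministic consistency of the MRER estimator under the alternative (Lemma 1(ii)):
with eigenvalues `λ_1 ≥ … ≥ λ_p`, positive for `l ≤ q` and zero for `l > q`, squared
eigenvalue estimates accurate at the stated rates, and ridge `c n = log n / n`,
the difference between the ratio at `q` and at `l ≠ q` converges to a negative limit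
(`-λ_{l+1}²/λ_l²` for `l < q`, `-1` for `l > q`), and eventually the ratio is minimized
at `i = q`. -/
theorem stmt_1 (p q : ℕ) (hq1 : 1 ≤ q) (hqp : q < p) (lam : ℕ → ℝ) (hat : ℕ → ℕ → ℝ)
    (hmono : ∀ i j, 1 ≤ i → i ≤ j → j ≤ p → lam j ≤ lam i)
    (hnonneg : ∀ i, 1 ≤ i → i ≤ p → 0 ≤ lam i)
    (hpos : ∀ l, 1 ≤ l → l ≤ q → 0 < lam l)
    (hzero : ∀ l, q < l → l ≤ p → lam l = 0)
    (h1 : ∀ l, 1 ≤ l → l ≤ q →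
      (fun n => hat n l ^ 2 - lam l ^ 2) =O[atTop] fun n : ℕ => (n : ℝ) ^ (-(1/2 : ℝ)))
    (h2 : ∀ l, q < l → l ≤ p → (fun n => hat n l ^ 2) =O[atTop] fun n : ℕ => (n : ℝ)⁻¹)
    (c : ℕ → ℝ) (hc : ∀ n, c n = Real.log n / n) :
    (∀ l, 1 ≤ l → l < q →
      Tendsto (fun n => (hat n (q + 1) ^ 2 + c n) / (hat n q ^ 2 + c n)
          - (hat n (l + 1) ^ 2 + c n) / (hat n l ^ 2 + c n)) atTop
        (nhds (-(lam (l + 1) ^ 2 / lam l ^ 2))) ∧ -(lam (l + 1) ^ 2 / lam l ^ 2) < 0) ∧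
    (∀ l, q < l → l + 1 ≤ p →
      Tendsto (fun n => (hat n (q + 1) ^ 2 + c n) / (hat n q ^ 2 + c n)
          - (hat n (l + 1) ^ 2 + c n) / (hat n l ^ 2 + c n)) atTop (nhds (-1))) ∧
    (∀ᶠ n in atTop, ∀ i, 1 ≤ i → i + 1 ≤ p → i ≠ q →
      (hat n (q + 1) ^ 2 + c n) / (hat n q ^ 2 + c n)
        < (hat n (i + 1) ^ 2 + c n) / (hat n i ^ 2 + c n)) :=
  stmt_1_general p q hq1 hqp lam hat hpos h1 h2 c hc
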